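/- Let G = ⟨S | R⟩ be a group presentation with all relators of even length. The following are equivalent: (1) for every geodesic word of the form ws with s ∈ S ∪ S⁻¹, the word wss is geodesic; (2) for all g ∈ G, if s ∈ R(g) then s⁻¹ ∉ R(g); (3) for every geodesic word w and every s ∈ S ∪ S⁻¹, there exists e ∈ {1, −1} such that ws^e is geodesic. -/

import Mathlib

section GeneralPresentation

variable {S : Type*}

/-- The element of the presented group represented by a letter `(s, e)`:
`s` if `e = true`, `s⁻¹` if `e = false`. -/
def evalLetter (rels : Set (FreeGroup S)) (t : S × Bool) : PresentedGroup rels :=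
  if t.2 then PresentedGroup.of t.1 else (PresentedGroup.of t.1)⁻¹

/-- The element of the presented group represented by a word in `S ∪ S⁻¹`. -/
def evalW (rels : Set (FreeGroup S)) (w : List (S × Bool)) : PresentedGroup rels :=
  (w.map (evalLetter rels)).prod

/-- The word length (distance to the identity in the word metric) of an element
of the presented group with respect to the generating set `S`. -/
noncomputable def wlen (rels : Set (FreeGroup S)) (g : PresentedGroup rels) : ℕ :=
  sInf {m | ∃ w : List (S × Bool), evalW rels w = g ∧ w.length = m}

/-- A word is geodesic if its length equals the word length of the element it represents. -/
def IsGeodesic (rels : Set (FreeGroup S)) (w : List (S × Bool)) : Prop :=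
  w.length = wlen rels (evalW rels w)

/-- `Rset rels g` is the set of letters `t ∈ S ∪ S⁻¹` such that some geodesic word
ending in `t` represents `g`. -/
def Rset (rels : Set (FreeGroup S)) (g : PresentedGroup rels) : Set (S × Bool) :=
  {t | ∃ v : List (S × Bool), IsGeodesic rels (v ++ [t]) ∧ evalW rels (v ++ [t]) = g}

/-- The inverse of a letter. -/
def invLetter (t : S × Bool) : S × Bool := (t.1, !t.2)

/-- All relators of the presentation have even length. -/
def EvenRels [DecidableEq S] (rels : Set (FreeGroup S)) : Prop :=
  ∀ r ∈ rels, Even (FreeGroup.toWord r).length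

end GeneralPresentation

/-!
Since the relators have even length, the parity of the length of a word is an invariant of the
element it represents, so right multiplication by a letter changes the word length by exactly
one. A letter `t` lies in `R(g)` exactly when `|g t⁻¹| < |g|`, and `w t` extends a geodesic `w`
geodesically exactly when `|[w] t| > |[w]|`. In these terms each of the three conditions says that
no element `g` and letter `t` satisfy both `|g t| < |g|` and `|g t⁻¹| < |g|`.
-/

section WordMetric

variable {S : Type*} {rels : Set (FreeGroup S)}

@[simp] lemma evalW_nil : evalW rels [] = 1 := rfl

@[simp] lemma evalW_cons (t : S × Bool) (w : List (S × Bool)) :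
    evalW rels (t :: w) = evalLetter rels t * evalW rels w := List.prod_cons

@[simp] lemma evalW_append (w v : List (S × Bool)) :
    evalW rels (w ++ v) = evalW rels w * evalW rels v := by
  simp [evalW]

@[simp] lemma evalW_singleton (t : S × Bool) : evalW rels [t] = evalLetter rels t := by
  simp [evalW]

@[simp] lemma invLetter_invLetter (t : S × Bool) : invLetter (invLetter t) = t := by
  simp [invLetter]

@[simp] lemma evalLetter_invLetter (t : S × Bool) :
    evalLetter rels (invLetter t) = (evalLetter rels t)⁻¹ := by
  obtain ⟨s, _ | _⟩ := t <;> simp [evalLetter, invLetter]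

lemma evalW_eq_mk (w : List (S × Bool)) :
    evalW rels w = PresentedGroup.mk rels (FreeGroup.mk w) := by
  induction w with
  | nil => rfl
  | cons t w ih =>
    rw [evalW_cons, ih, ← List.singleton_append, ← FreeGroup.mul_mk, map_mul]
    obtain ⟨s, _ | _⟩ := t
    · simp only [evalLetter, PresentedGroup.of, ← map_inv, FreeGroup.of, FreeGroup.inv_mk]; rfl
    · rfl

lemma evalW_surjective : Function.Surjective (evalW rels) := by
  intro g
  obtain ⟨⟨w⟩, rfl⟩ := PresentedGroup.mk_surjective rels g
  exact ⟨w, evalW_eq_mk w⟩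

lemma wlen_le_length (w : List (S × Bool)) : wlen rels (evalW rels w) ≤ w.length :=
  Nat.sInf_le ⟨w, rfl, rfl⟩

lemma exists_isGeodesic (g : PresentedGroup rels) :
    ∃ w, IsGeodesic rels w ∧ evalW rels w = g := by
  obtain ⟨w, hw, hlen⟩ : wlen rels g ∈ {m | ∃ w, evalW rels w = g ∧ w.length = m} :=
    Nat.sInf_mem <| let ⟨w, hw⟩ := evalW_surjective g; ⟨w.length, w, hw, rfl⟩
  exact ⟨w, by rw [IsGeodesic, hw, hlen], hw⟩

lemma wlen_mul_evalLetter_le (g : PresentedGroup rels) (t : S × Bool) :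
    wlen rels (g * evalLetter rels t) ≤ wlen rels g + 1 := by
  obtain ⟨w, hw, rfl⟩ := exists_isGeodesic g
  simpa [show w.length = _ from hw] using wlen_le_length (rels := rels) (w ++ [t])

lemma le_wlen_mul_evalLetter (g : PresentedGroup rels) (t : S × Bool) :
    wlen rels g ≤ wlen rels (g * evalLetter rels t) + 1 := by
  simpa using wlen_mul_evalLetter_le (g * evalLetter rels t) (invLetter t)

lemma mem_Rset_iff {g : PresentedGroup rels} {t : S × Bool} :
    t ∈ Rset rels g ↔ wlen rels (g * evalLetter rels (invLetter t)) < wlen rels g := by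
  constructor
  · rintro ⟨v, hv, rfl⟩
    have hvt : evalW rels (v ++ [t]) * evalLetter rels (invLetter t) = evalW rels v := by simp
    rw [hvt, ← show (v ++ [t]).length = _ from hv, List.length_append, List.length_singleton]
    exact Nat.lt_succ_of_le (wlen_le_length v)
  · intro h
    obtain ⟨v, hv, hvg⟩ := exists_isGeodesic (g * evalLetter rels (invLetter t))
    have hvt : evalW rels (v ++ [t]) = g := by simp [hvg]
    refine ⟨v, ?_, hvt⟩
    have := le_wlen_mul_evalLetter g (invLetter t)
    rw [IsGeodesic, hvg] at hv
    rw [IsGeodesic, hvt, List.length_append, List.length_singleton, hv]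
    omega

lemma IsGeodesic.append_singleton_iff {w : List (S × Bool)} (hw : IsGeodesic rels w)
    (t : S × Bool) :
    IsGeodesic rels (w ++ [t]) ↔
      wlen rels (evalW rels w) < wlen rels (evalW rels w * evalLetter rels t) := by
  have := wlen_mul_evalLetter_le (evalW rels w) t
  simp only [IsGeodesic, List.length_append, List.length_singleton, evalW_append,
    evalW_singleton] at hw ⊢
  omega

lemma forall_isGeodesic_append_pair_iff :
    (∀ (w : List (S × Bool)) (t : S × Bool),
        IsGeodesic rels (w ++ [t]) → IsGeodesic rels (w ++ [t, t])) ↔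
      ∀ (g : PresentedGroup rels) (t : S × Bool),
        t ∈ Rset rels g → wlen rels g < wlen rels (g * evalLetter rels t) := by
  constructor
  · rintro h g t ⟨v, hv, rfl⟩
    have hvtt := h v t hv
    rwa [show v ++ [t, t] = v ++ [t] ++ [t] by simp, hv.append_singleton_iff] at hvtt
  · intro h w t hw
    rw [show w ++ [t, t] = w ++ [t] ++ [t] by simp, hw.append_singleton_iff]
    exact h _ t ⟨w, hw, rfl⟩

lemma forall_isGeodesic_append_or_iff :
    (∀ (w : List (S × Bool)) (t : S × Bool), IsGeodesic rels w →
        IsGeodesic rels (w ++ [t]) ∨ IsGeodesic rels (w ++ [invLetter t])) ↔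
      ∀ (g : PresentedGroup rels) (t : S × Bool),
        wlen rels g < wlen rels (g * evalLetter rels t) ∨
          wlen rels g < wlen rels (g * evalLetter rels (invLetter t)) := by
  constructor
  · intro h g t
    obtain ⟨w, hw, rfl⟩ := exists_isGeodesic g
    simpa [hw.append_singleton_iff] using h w t hw
  · intro h w t hw
    simpa [hw.append_singleton_iff] using h (evalW rels w) t

lemma lift_ofAdd_one_mk (L : List (S × Bool)) :
    FreeGroup.lift (fun _ : S => Multiplicative.ofAdd (1 : ZMod 2)) (FreeGroup.mk L) =
      Multiplicative.ofAdd (L.length : ZMod 2) := by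
  have hinv : (Multiplicative.ofAdd (1 : ZMod 2))⁻¹ = Multiplicative.ofAdd 1 := rfl
  simp [FreeGroup.lift_mk, hinv, ← ofAdd_nsmul]

section Parity

variable [DecidableEq S]

noncomputable def lengthParity (heven : EvenRels rels) :
    PresentedGroup rels →* Multiplicative (ZMod 2) :=
  PresentedGroup.toGroup (f := fun _ => Multiplicative.ofAdd 1) fun r hr => by
    rw [← FreeGroup.mk_toWord (x := r), lift_ofAdd_one_mk, (heven r hr).natCast_zmod_two]
    rfl

lemma lengthParity_evalW (heven : EvenRels rels) (w : List (S × Bool)) :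
    lengthParity heven (evalW rels w) = Multiplicative.ofAdd (w.length : ZMod 2) := by
  rw [evalW_eq_mk]
  exact lift_ofAdd_one_mk w

lemma natCast_length_eq_of_evalW_eq (heven : EvenRels rels) {w v : List (S × Bool)}
    (h : evalW rels w = evalW rels v) : (w.length : ZMod 2) = v.length :=
  Multiplicative.ofAdd.injective <| by
    rw [← lengthParity_evalW heven, h, lengthParity_evalW]

lemma wlen_mul_evalLetter_ne (heven : EvenRels rels) (g : PresentedGroup rels) (t : S × Bool) :
    wlen rels (g * evalLetter rels t) ≠ wlen rels g := by
  obtain ⟨u, hu, rfl⟩ := exists_isGeodesic g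
  obtain ⟨v, hv, hvg⟩ := exists_isGeodesic (evalW rels u * evalLetter rels t)
  have := natCast_length_eq_of_evalW_eq heven (w := u ++ [t]) (v := v) (by simp [hvg])
  intro heq
  rw [IsGeodesic, hvg, heq, ← hu] at hv
  simp [hv] at this

lemma lt_wlen_mul_evalLetter_iff (heven : EvenRels rels) (g : PresentedGroup rels)
    (t : S × Bool) :
    wlen rels g < wlen rels (g * evalLetter rels t) ↔ invLetter t ∉ Rset rels g := by
  have := wlen_mul_evalLetter_ne heven g t
  rw [mem_Rset_iff, invLetter_invLetter]
  omega

end Parity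

end WordMetric

/-- equivalence of the three conditions of Lemma `eq`. -/
theorem stallings_conditions_equiv {S : Type*} [DecidableEq S] (rels : Set (FreeGroup S))
    (heven : EvenRels rels) :
    ((∀ (w : List (S × Bool)) (t : S × Bool),
        IsGeodesic rels (w ++ [t]) → IsGeodesic rels (w ++ [t, t])) ↔
      (∀ (g : PresentedGroup rels) (t : S × Bool),
        t ∈ Rset rels g → invLetter t ∉ Rset rels g)) ∧
    ((∀ (g : PresentedGroup rels) (t : S × Bool),
        t ∈ Rset rels g → invLetter t ∉ Rset rels g) ↔
      (∀ (w : List (S × Bool)) (t : S × Bool), IsGeodesic rels w →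
        IsGeodesic rels (w ++ [t]) ∨ IsGeodesic rels (w ++ [invLetter t]))) := by
  rw [forall_isGeodesic_append_pair_iff, forall_isGeodesic_append_or_iff]
  simp only [lt_wlen_mul_evalLetter_iff heven, invLetter_invLetter, iff_self, true_and]
  exact forall₂_congr fun _ _ => imp_iff_not_or.trans or_comm
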